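/- Let n be an even natural number with 4 ≤ n and suppose n ≡ 2 (mod 4). If 0 < η ≤ κ are real numbers, then the Wiener index of the saturated fuzzy cycle satisfies WI(n,κ,η) = (n(n^2 − 4)/16)·κ + (n(n^2 + 4)/16)·η. -/

import Mathlib

/-- Edge weight: the edge from `i` to `i+1` has weight `κ` if `i.val` is even,
and `η` if `i.val` is odd. -/
noncomputable def w (n : ℕ) (κ η : ℝ) (i : ZMod n) : ℝ :=
  if Even i.val then κ else η

/-- Forward arc weight: `A u k = Σ_{j=0}^{k-1} w (u + j)`. -/
noncomputable def A (n : ℕ) (κ η : ℝ) (u : ZMod n) (k : ℕ) : ℝ :=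
  ∑ j ∈ Finset.range k, w n κ η (u + (j : ZMod n))

/-- Cycle distance: `min (m, n - m)` where `v = u + m`, `0 ≤ m < n`. -/
def cdist (n : ℕ) (u v : ZMod n) : ℕ :=
  min (v - u).val (n - (v - u).val)

/-- Geodesic weight between `u` and `v`. -/
noncomputable def ds (n : ℕ) (κ η : ℝ) (u v : ZMod n) : ℝ :=
  if u = v then 0
  else if cdist n u v < n / 2 then
    (if v = u + (cdist n u v : ZMod n) then A n κ η u (cdist n u v)
     else A n κ η v (cdist n u v))
  else min (A n κ η u (n / 2)) (A n κ η v (n / 2))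

/-- Wiener index: sum of `ds` over unordered pairs of distinct vertices. -/
noncomputable def WI (n : ℕ) [NeZero n] (κ η : ℝ) : ℝ :=
  (1 / 2) * ∑ u : ZMod n, ∑ v : ZMod n, ds n κ η u v

/-!
Group the ordered pairs `(u, u + c)` by their difference `c`. Away from the antipodal difference
the geodesic is the shorter arc, and as `u` runs over the cycle these arcs cover every edge
`min c.val (n - c.val)` times, so the row of `c` contributes `min c.val (n - c.val) · (n/2)(κ + η)`.
For the antipodal difference `c.val = n/2 = 2t + 1`, the two half-cycles from `u` and from `u + c`
start on edges of different strengths because `c.val` is odd, so they weigh `(t+1)κ + tη` and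
`tκ + (t+1)η`, and the geodesic weight is `t(κ + η) + min κ η`.
-/

open Finset

namespace ZMod

theorem sum_univ_eq_sum_range {M : Type*} [AddCommMonoid M] {n : ℕ} [NeZero n]
    (f : ZMod n → M) : ∑ u : ZMod n, f u = ∑ m ∈ range n, f m :=
  sum_nbij' ZMod.val (↑) (fun u _ => mem_range.2 u.val_lt) (fun _ _ => mem_univ _)
    (fun u _ => natCast_zmod_val u) (fun _ hm => val_natCast_of_lt (mem_range.1 hm))
    (fun u _ => by rw [natCast_zmod_val])

theorem even_val_add_natCast {n : ℕ} [NeZero n] (hn : 2 ∣ n) (u : ZMod n) (j : ℕ) :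
    Even (u + j).val ↔ Even (u.val + j) := by
  rw [val_add, val_natCast, Nat.even_iff, Nat.even_iff, Nat.mod_mod_of_dvd _ hn, Nat.add_mod,
    Nat.mod_mod_of_dvd _ hn, ← Nat.add_mod]

end ZMod

theorem sum_range_min_sub (h : ℕ) : ∑ m ∈ range (2 * h), min m (2 * h - m) = h * h := by
  rw [two_mul, sum_range_add, ← sum_add_distrib,
    sum_congr rfl fun m hm => show min m (h + h - m) + min (h + m) (h + h - (h + m)) = h by
      have := mem_range.1 hm; omega]
  simp

theorem sum_erase_range_min_sub_add {h : ℕ} (hh : 0 < h) :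
    ∑ m ∈ (range (2 * h)).erase h, min m (2 * h - m) + h = h * h := by
  rw [← sum_range_min_sub, ← add_sum_erase _ _ (mem_range.2 (by omega : h < 2 * h)),
    add_comm, two_mul, Nat.add_sub_cancel, min_self]

section Alternating

variable (κ η : ℝ)

theorem sum_range_two_mul_ite_even_add (a k : ℕ) :
    ∑ j ∈ range (2 * k), (if Even (a + j) then κ else η) = k * (κ + η) := by
  induction k with
  | zero => simp
  | succ k ih =>
    rw [show 2 * (k + 1) = 2 * k + 1 + 1 by ring, sum_range_succ, sum_range_succ, ih]
    by_cases ha : Even a <;> simp [ha, Nat.even_add, parity_simps] <;> ring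

theorem sum_range_two_mul_add_one_ite_even_add (a k : ℕ) :
    ∑ j ∈ range (2 * k + 1), (if Even (a + j) then κ else η) =
      (if Even a then κ else η) + k * (κ + η) := by
  rw [sum_range_succ, sum_range_two_mul_ite_even_add, add_comm]
  simp [Nat.even_add]

end Alternating

section Arcs

variable {n : ℕ} [NeZero n] (κ η : ℝ)

theorem A_eq_sum_range_ite (hn : 2 ∣ n) (u : ZMod n) (k : ℕ) :
    A n κ η u k = ∑ j ∈ range k, if Even (u.val + j) then κ else η := by
  simp_rw [A, w, ZMod.even_val_add_natCast hn]

theorem A_two_mul_add_one (hn : 2 ∣ n) (u : ZMod n) (t : ℕ) :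
    A n κ η u (2 * t + 1) = (if Even u.val then κ else η) + t * (κ + η) := by
  rw [A_eq_sum_range_ite κ η hn, sum_range_two_mul_add_one_ite_even_add]

theorem sum_w (hn : Even n) : ∑ u : ZMod n, w n κ η u = (n / 2 : ℕ) * (κ + η) := by
  have hfull : ∑ u : ZMod n, w n κ η u = A n κ η 0 n := by
    simp_rw [A, zero_add, ZMod.sum_univ_eq_sum_range]
  have := sum_range_two_mul_ite_even_add κ η 0 (n / 2)
  rwa [Nat.two_mul_div_two_of_even hn, ← ZMod.val_zero, ← A_eq_sum_range_ite κ η hn.two_dvd,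
    ← hfull] at this

theorem sum_A (k : ℕ) : ∑ u : ZMod n, A n κ η u k = k * ∑ u : ZMod n, w n κ η u := by
  simp_rw [A]
  rw [sum_comm, sum_congr rfl fun (j : ℕ) _ => Fintype.sum_equiv (Equiv.addRight (j : ZMod n))
    (fun u => w n κ η (u + j)) (w n κ η) fun _ => rfl, sum_const, card_range, nsmul_eq_mul]

end Arcs

theorem cdist_add_right {n : ℕ} (u c : ZMod n) : cdist n u (u + c) = min c.val (n - c.val) := by
  rw [cdist, add_sub_cancel_left]

section Geodesics

variable {n : ℕ} [NeZero n] (κ η : ℝ)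

theorem ds_add_of_val_lt {u c : ZMod n} (hc : c.val < n / 2) :
    ds n κ η u (u + c) = A n κ η u c.val := by
  by_cases hc0 : c = 0
  · simp [hc0, ds, A]
  rw [ds, if_neg (by simpa using hc0), cdist_add_right, min_eq_left (by omega), if_pos hc,
    if_pos (by rw [ZMod.natCast_zmod_val])]

theorem ds_add_of_val_gt {u c : ZMod n} (hc : n - c.val < n / 2) :
    ds n κ η u (u + c) = A n κ η (u + c) (n - c.val) := by
  have hc0 : c ≠ 0 := by rintro rfl; rw [ZMod.val_zero] at hc; omega
  have hcn : c.val < n := c.val_lt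
  have hne : u + c ≠ u + ((n - c.val : ℕ) : ZMod n) := by
    intro he
    have := congrArg ZMod.val (add_left_cancel he)
    rw [ZMod.val_natCast_of_lt (by omega)] at this
    omega
  rw [ds, if_neg (by simpa using hc0), cdist_add_right, min_eq_right (by omega), if_pos hc,
    if_neg hne]

theorem sum_ds_add_of_val_ne_half (hn : Even n) {c : ZMod n} (hc : c.val ≠ n / 2) :
    ∑ u : ZMod n, ds n κ η u (u + c) = min c.val (n - c.val) * ∑ u : ZMod n, w n κ η u := by
  rcases hc.lt_or_gt with hlt | hgt
  · simp_rw [ds_add_of_val_lt κ η hlt, sum_A, min_eq_left (by omega : c.val ≤ n - c.val)]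
  · have hlt : n - c.val < n / 2 := by have := c.val_lt; obtain ⟨k, hk⟩ := hn; omega
    simp_rw [ds_add_of_val_gt κ η hlt]
    rw [Fintype.sum_equiv (Equiv.addRight c)
      (fun u => A n κ η (u + c) (n - c.val)) (fun v => A n κ η v (n - c.val)) fun _ => rfl, sum_A,
      min_eq_right (by omega : n - c.val ≤ c.val)]

theorem ds_add_of_val_eq_half {t : ℕ} (hn : n = 2 * (2 * t + 1)) {u c : ZMod n}
    (hc : c.val = 2 * t + 1) : ds n κ η u (u + c) = t * (κ + η) + min κ η := by
  have hn2 : 2 ∣ n := ⟨_, hn⟩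
  have hc0 : c ≠ 0 := by rintro rfl; simp at hc
  have hpar : Even (u + c).val ↔ ¬ Even u.val := by
    rw [← ZMod.natCast_zmod_val c, ZMod.even_val_add_natCast hn2, hc, Nat.even_add]
    simp [parity_simps]
  rw [ds, if_neg (by simpa using hc0), cdist_add_right, hc, show n / 2 = 2 * t + 1 by omega,
    min_eq_left (by omega), if_neg (lt_irrefl _), A_two_mul_add_one κ η hn2,
    A_two_mul_add_one κ η hn2, min_add_add_right, add_comm]
  by_cases hu : Even u.val <;> simp [hu, hpar, min_comm]

theorem sum_ds_add_half {t : ℕ} (hn : n = 2 * (2 * t + 1)) :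
    ∑ u : ZMod n, ds n κ η u (u + (n / 2 : ℕ)) = n * (t * (κ + η) + min κ η) := by
  have hhalf : n / 2 = 2 * t + 1 := by omega
  have hval : ((n / 2 : ℕ) : ZMod n).val = 2 * t + 1 := by
    rw [ZMod.val_natCast_of_lt (by omega), hhalf]
  simp_rw [ds_add_of_val_eq_half κ η hn hval, sum_const, card_univ, ZMod.card, nsmul_eq_mul]

end Geodesics

theorem WI_eq_sum_range (n : ℕ) [NeZero n] (κ η : ℝ) :
    WI n κ η = 1 / 2 * ∑ m ∈ range n, ∑ u : ZMod n, ds n κ η u (u + m) := by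
  rw [WI, ← ZMod.sum_univ_eq_sum_range (fun c => ∑ u : ZMod n, ds n κ η u (u + c)),
    sum_comm (f := fun c u => ds n κ η u (u + c))]
  congr 1
  exact sum_congr rfl fun u _ => (Fintype.sum_equiv (Equiv.addLeft u)
    (fun c => ds n κ η u (u + c)) (ds n κ η u) fun _ => rfl).symm

theorem WI_eq_of_even {n : ℕ} [NeZero n] (κ η : ℝ) (hn : Even n) :
    WI n κ η = 1 / 2 * (∑ u : ZMod n, ds n κ η u (u + (n / 2 : ℕ)) +
      ((n / 2 : ℕ) * (n / 2 : ℕ) - (n / 2 : ℕ)) * ((n / 2 : ℕ) * (κ + η))) := by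
  have hpos := NeZero.pos n
  have h2 := hn.two_dvd
  have hmem : n / 2 ∈ range n := mem_range.2 (by omega)
  have hrow : ∀ m ∈ (range n).erase (n / 2), ∑ u : ZMod n, ds n κ η u (u + m) =
      (min m (n - m) : ℕ) * ∑ u : ZMod n, w n κ η u := by
    intro m hm
    have hval := ZMod.val_natCast_of_lt (n := n) (mem_range.1 (mem_of_mem_erase hm))
    rw [sum_ds_add_of_val_ne_half κ η hn (hval.trans_ne (ne_of_mem_erase hm)), hval]
  have hmin : ((∑ m ∈ (range n).erase (n / 2), min m (n - m) : ℕ) : ℝ) =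
      (n / 2 : ℕ) * (n / 2 : ℕ) - (n / 2 : ℕ) := by
    have := sum_erase_range_min_sub_add (h := n / 2) (by omega)
    rw [Nat.two_mul_div_two_of_even hn] at this
    rw [eq_sub_iff_add_eq]
    exact_mod_cast this
  rw [WI_eq_sum_range, ← add_sum_erase _ _ hmem, sum_congr rfl hrow, ← sum_mul, ← Nat.cast_sum,
    hmin, sum_w κ η hn]

theorem wiener_index_saturated_cycle_two_mod_four_general
    (n : ℕ) [NeZero n] (hmod : n % 4 = 2)
    (κ η : ℝ) (hηκ : η ≤ κ) :
    WI n κ η = ((n : ℝ) * ((n : ℝ) ^ 2 - 4) / 16) * κ +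
      ((n : ℝ) * ((n : ℝ) ^ 2 + 4) / 16) * η := by
  obtain ⟨t, ht⟩ : ∃ t, n = 2 * (2 * t + 1) := ⟨n / 4, by omega⟩
  rw [WI_eq_of_even κ η ⟨_, ht.trans (two_mul _)⟩, sum_ds_add_half κ η ht, min_eq_right hηκ,
    show n / 2 = 2 * t + 1 by omega, ht]
  push_cast
  ring

theorem wiener_index_saturated_cycle_two_mod_four
    (n : ℕ) [NeZero n] (hE : Even n) (h4 : 4 ≤ n) (hmod : n % 4 = 2)
    (κ η : ℝ) (hη : 0 < η) (hηκ : η ≤ κ) :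
    WI n κ η = ((n : ℝ) * ((n : ℝ) ^ 2 - 4) / 16) * κ +
      ((n : ℝ) * ((n : ℝ) ^ 2 + 4) / 16) * η :=
  wiener_index_saturated_cycle_two_mod_four_general n hmod κ η hηκ
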